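/- Let 0 < q < 1 and a, u > 0 with |a u| < 1. The first-type q-Sumudu transform S_q(f)(u) = N_q(f)(u;1) satisfies S_q(e_q(a x))(u) = 1/(1 - a u). -/

import Mathlib

/-- The q-Pochhammer symbol `(a;q)_n`. -/
noncomputable def qPoch (q a : ℝ) (n : ℕ) : ℝ := ∏ k ∈ Finset.range n, (1 - a * q ^ k)

/-- `(a;q)_∞`. -/
noncomputable def qPochInf (q a : ℝ) : ℝ := ∏' k : ℕ, (1 - a * q ^ k)

/-- The q-exponential `e_q(t) = ∑_{n≥0} t^n/(q;q)_n`. -/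
noncomputable def qExp (q t : ℝ) : ℝ := ∑' n : ℕ, t ^ n / qPoch q q n

/-- The first-type q-Natural transform. -/
noncomputable def qNatural (q : ℝ) (f : ℝ → ℝ) (u v : ℝ) : ℝ :=
  qPochInf q q / v * ∑' k : ℕ, q ^ k * f (u / v * q ^ k) / qPoch q q k

/-- The first-type q-Sumudu transform `S_q(f)(u) = N_q(f)(u;1)`. -/
noncomputable def qSumudu (q : ℝ) (f : ℝ → ℝ) (u : ℝ) : ℝ := qNatural q f u 1

/-!
With `b = a u`, expanding `e_q(b q^k)` as a power series and exchanging the two (absolutely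
convergent) sums turns `∑_k q^k e_q(b q^k)/(q;q)_k` into `∑_n b^n/(q;q)_n · e_q(q^{n+1})`. Iterating the functional
equation `e_q(q t) = (1 - t) e_q(t)` gives `e_q(q^{n+1}) = (q;q)_n e_q(q)`, so the sum is
`e_q(q)/(1 - b)`. Finally Euler's identity `(q;q)_∞ e_q(q) = 1`, obtained by letting `N → ∞` in
`(t;q)_N e_q(t) = e_q(q^N t)`, cancels the prefactor `(q;q)_∞`.
-/

open Filter Topology

section QPochhammer

variable {q a : ℝ}

lemma qPoch_zero : qPoch q a 0 = 1 := Finset.prod_range_zero _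

lemma qPoch_succ (n : ℕ) : qPoch q a (n + 1) = qPoch q a n * (1 - a * q ^ n) :=
  Finset.prod_range_succ _ n

lemma one_sub_mul_pow_pos (ha : a < 1) (hq0 : 0 ≤ q) (hq1 : q ≤ 1) (k : ℕ) :
    0 < 1 - a * q ^ k := by
  rcases le_or_gt a 0 with ha0 | ha0
  · linarith [mul_nonpos_of_nonpos_of_nonneg ha0 (pow_nonneg hq0 k)]
  · linarith [mul_le_of_le_one_right ha0.le (pow_le_one₀ hq0 hq1 (n := k))]

lemma qPoch_pos (ha : a < 1) (hq0 : 0 ≤ q) (hq1 : q ≤ 1) (n : ℕ) : 0 < qPoch q a n :=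
  Finset.prod_pos fun k _ => one_sub_mul_pow_pos ha hq0 hq1 k

lemma qPoch_antitone (ha0 : 0 ≤ a) (ha1 : a < 1) (hq0 : 0 ≤ q) (hq1 : q ≤ 1) :
    Antitone (qPoch q a) := by
  refine antitone_nat_of_succ_le fun n => ?_
  rw [qPoch_succ]
  exact mul_le_of_le_one_right (qPoch_pos ha1 hq0 hq1 n).le
    (sub_le_self _ (by positivity))

lemma summable_mul_pow (hq : |q| < 1) : Summable fun k : ℕ => a * q ^ k :=
  (summable_geometric_of_abs_lt_one hq).mul_left a

lemma tendsto_qPoch_qPochInf (hq : |q| < 1) :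
    Tendsto (qPoch q a) atTop (𝓝 (qPochInf q a)) := by
  have : Multipliable fun k : ℕ => 1 - a * q ^ k := by
    simpa only [← sub_eq_add_neg] using
      Real.multipliable_one_add_of_summable (summable_mul_pow (a := a) hq).neg
  exact this.hasProd.tendsto_prod_nat

lemma qPochInf_pos (ha : a < 1) (hq0 : 0 ≤ q) (hq1 : q < 1) : 0 < qPochInf q a := by
  have hq : |q| < 1 := by rwa [abs_of_nonneg hq0]
  have hne : qPochInf q a ≠ 0 := by
    have := tprod_one_add_ne_zero_of_summable (f := fun k : ℕ => -(a * q ^ k))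
      (fun k => by rw [← sub_eq_add_neg]; exact (one_sub_mul_pow_pos ha hq0 hq1.le k).ne')
      (by simpa only [norm_neg] using (summable_mul_pow (a := a) hq).norm)
    simpa only [qPochInf, ← sub_eq_add_neg] using this
  exact hne.symm.lt_of_le <| ge_of_tendsto' (tendsto_qPoch_qPochInf hq)
    fun n => (qPoch_pos ha hq0 hq1.le n).le

lemma qPochInf_le_qPoch (ha0 : 0 ≤ a) (ha1 : a < 1) (hq0 : 0 ≤ q) (hq1 : q < 1) (n : ℕ) :
    qPochInf q a ≤ qPoch q a n :=
  (qPoch_antitone ha0 ha1 hq0 hq1.le).le_of_tendsto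
    (tendsto_qPoch_qPochInf (by rwa [abs_of_nonneg hq0])) n

end QPochhammer

section QExp

variable {q t : ℝ}

lemma hasSum_qExp (hq0 : 0 < q) (hq1 : q < 1) (ht : |t| < 1) :
    HasSum (fun n : ℕ => t ^ n / qPoch q q n) (qExp q t) := by
  refine Summable.hasSum (Summable.of_norm_bounded
    ((summable_geometric_of_lt_one (abs_nonneg t) ht).div_const (qPochInf q q)) fun n => ?_)
  rw [norm_div, norm_pow, Real.norm_of_nonneg (qPoch_pos hq1 hq0.le hq1.le n).le, Real.norm_eq_abs]
  exact div_le_div_of_nonneg_left (by positivity) (qPochInf_pos hq1 hq0.le hq1)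
    (qPochInf_le_qPoch hq0.le hq1 hq0.le hq1 n)

lemma qExp_zero : qExp q 0 = 1 := by
  rw [qExp, tsum_eq_single 0 fun n hn => by simp [hn]]
  simp [qPoch_zero]

lemma tendsto_qExp_nhds_zero (hq0 : 0 < q) (hq1 : q < 1) :
    Tendsto (qExp q) (𝓝 0) (𝓝 1) := by
  rw [← qExp_zero (q := q)]
  refine tendsto_tsum_of_dominated_convergence
    (hasSum_qExp hq0 hq1 (t := 1 / 2) (by norm_num [abs_of_pos])).summable
    (fun n => ((continuous_pow n).div_const _).tendsto 0) ?_
  filter_upwards [Metric.closedBall_mem_nhds (0 : ℝ) (by norm_num : (0 : ℝ) < 1 / 2)] with x hx n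
  rw [Metric.mem_closedBall, dist_zero_right, Real.norm_eq_abs] at hx
  have hP := qPoch_pos hq1 hq0.le hq1.le n
  rw [norm_div, norm_pow, Real.norm_of_nonneg hP.le, Real.norm_eq_abs]
  gcongr

lemma qExp_mul_left (hq0 : 0 < q) (hq1 : q < 1) (ht : |t| < 1) :
    qExp q (q * t) = (1 - t) * qExp q t := by
  have hqt : |q * t| < 1 := by
    rw [abs_mul, abs_of_pos hq0]; nlinarith [abs_nonneg t]
  have hdiff := (hasSum_qExp hq0 hq1 ht).sub (hasSum_qExp hq0 hq1 hqt)
  have hshift : HasSum (fun n => t ^ (n + 1) / qPoch q q (n + 1) - (q * t) ^ (n + 1) /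
      qPoch q q (n + 1)) (t * qExp q t) := by
    refine ((hasSum_qExp hq0 hq1 ht).mul_left t).congr_fun fun n => ?_
    have := (qPoch_pos hq1 hq0.le hq1.le n).ne'
    have := (one_sub_mul_pow_pos hq1 hq0.le hq1.le n).ne'
    rw [qPoch_succ]
    field_simp
    ring
  have := hdiff.unique (by simpa [qPoch_zero] using (hasSum_nat_add_iff
    (f := fun n => t ^ n / qPoch q q n - (q * t) ^ n / qPoch q q n) 1).mp hshift)
  linarith

lemma qPoch_mul_qExp (hq0 : 0 < q) (hq1 : q < 1) (ht : |t| < 1) (N : ℕ) :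
    qPoch q t N * qExp q t = qExp q (q ^ N * t) := by
  induction N with
  | zero => simp [qPoch_zero]
  | succ N ih =>
    have hqNt : |q ^ N * t| < 1 := by
      rw [abs_mul, abs_pow, abs_of_pos hq0]
      exact (mul_le_of_le_one_left (abs_nonneg t) (pow_le_one₀ hq0.le hq1.le)).trans_lt ht
    rw [qPoch_succ, mul_right_comm, ih, pow_succ', mul_assoc, qExp_mul_left hq0 hq1 hqNt,
      mul_comm (q ^ N) t]
    ring

lemma qPochInf_mul_qExp (hq0 : 0 < q) (hq1 : q < 1) (ht : |t| < 1) :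
    qPochInf q t * qExp q t = 1 := by
  have hqNt : Tendsto (fun N : ℕ => q ^ N * t) atTop (𝓝 0) := by
    simpa using (tendsto_pow_atTop_nhds_zero_of_lt_one hq0.le hq1).mul_const t
  refine tendsto_nhds_unique
    ((tendsto_qPoch_qPochInf (by rwa [abs_of_pos hq0])).mul_const (qExp q t)) ?_
  simpa only [Function.comp_def, qPoch_mul_qExp hq0 hq1 ht] using (tendsto_qExp_nhds_zero hq0 hq1).comp hqNt

end QExp

section DoubleSeries

variable {q b : ℝ}

noncomputable def qSumuduExpTerm (q b : ℝ) (p : ℕ × ℕ) : ℝ :=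
  b ^ p.1 / qPoch q q p.1 * ((q ^ (p.1 + 1)) ^ p.2 / qPoch q q p.2)

lemma hasSum_qSumuduExpTerm_fst (hq0 : 0 < q) (hq1 : q < 1) (n : ℕ) :
    HasSum (fun k => qSumuduExpTerm q b (n, k)) (b ^ n * qExp q q) := by
  have hqn : |q ^ (n + 1)| < 1 := by
    rw [abs_of_pos (by positivity)]; exact pow_lt_one₀ hq0.le hq1 n.succ_ne_zero
  have hP := (qPoch_pos hq1 hq0.le hq1.le n).ne'
  have hsum : b ^ n * qExp q q = b ^ n / qPoch q q n * qExp q (q ^ (n + 1)) := by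
    rw [pow_succ, ← qPoch_mul_qExp hq0 hq1 (by rwa [abs_of_pos hq0])]
    field_simp
  rw [hsum]
  exact (hasSum_qExp hq0 hq1 hqn).mul_left _

lemma hasSum_qSumuduExpTerm_snd (hq0 : 0 < q) (hq1 : q < 1) (hb : |b| < 1) (k : ℕ) :
    HasSum (fun n => qSumuduExpTerm q b (n, k)) (q ^ k * qExp q (b * q ^ k) / qPoch q q k) := by
  have hbq : |b * q ^ k| < 1 := by
    rw [abs_mul, abs_of_pos (pow_pos hq0 k)]
    exact (mul_le_of_le_one_right (abs_nonneg b) (pow_le_one₀ hq0.le hq1.le)).trans_lt hb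
  rw [mul_div_right_comm]
  refine ((hasSum_qExp hq0 hq1 hbq).mul_left _).congr_fun fun n => ?_
  rw [qSumuduExpTerm, ← pow_mul, mul_pow, ← pow_mul]
  ring

lemma qSumuduExpTerm_nonneg (hq0 : 0 < q) (hq1 : q < 1) (hb : 0 ≤ b) (p : ℕ × ℕ) :
    0 ≤ qSumuduExpTerm q b p := by
  have := qPoch_pos hq1 hq0.le hq1.le p.1
  have := qPoch_pos hq1 hq0.le hq1.le p.2
  unfold qSumuduExpTerm
  positivity

lemma norm_qSumuduExpTerm (hq0 : 0 < q) (hq1 : q < 1) (p : ℕ × ℕ) :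
    ‖qSumuduExpTerm q b p‖ = qSumuduExpTerm q |b| p := by
  simp only [qSumuduExpTerm, norm_mul, norm_div, norm_pow, Real.norm_eq_abs,
    abs_of_pos (qPoch_pos hq1 hq0.le hq1.le _), abs_of_pos hq0]

lemma summable_qSumuduExpTerm (hq0 : 0 < q) (hq1 : q < 1) (hb : |b| < 1) :
    Summable (qSumuduExpTerm q b) := by
  refine Summable.of_norm_bounded ?_ fun p => (norm_qSumuduExpTerm hq0 hq1 p).le
  refine (summable_prod_of_nonneg (qSumuduExpTerm_nonneg hq0 hq1 (abs_nonneg b))).mpr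
    ⟨fun n => (hasSum_qSumuduExpTerm_fst hq0 hq1 n).summable, ?_⟩
  simp only [(hasSum_qSumuduExpTerm_fst hq0 hq1 _).tsum_eq]
  exact (summable_geometric_of_lt_one (abs_nonneg b) hb).mul_right _

lemma hasSum_qSumuduExpTerm (hq0 : 0 < q) (hq1 : q < 1) (hb : |b| < 1) :
    HasSum (qSumuduExpTerm q b) (qExp q q / (1 - b)) := by
  have hF := (summable_qSumuduExpTerm hq0 hq1 hb).hasSum
  have hgeom := (hasSum_geometric_of_abs_lt_one hb).mul_right (qExp q q)
  rwa [(hF.prod_fiberwise (hasSum_qSumuduExpTerm_fst hq0 hq1)).unique hgeom, inv_mul_eq_div] at hF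

lemma hasSum_pow_mul_qExp_div_qPoch (hq0 : 0 < q) (hq1 : q < 1) (hb : |b| < 1) :
    HasSum (fun k => q ^ k * qExp q (b * q ^ k) / qPoch q q k) (qExp q q / (1 - b)) :=
  ((Equiv.prodComm ℕ ℕ).hasSum_iff.mpr (hasSum_qSumuduExpTerm hq0 hq1 hb)).prod_fiberwise
    (hasSum_qSumuduExpTerm_snd hq0 hq1 hb)

end DoubleSeries

theorem qSumudu_qExp_general (q a u : ℝ) (hq0 : 0 < q) (hq1 : q < 1)
    (h : |a * u| < 1) :
    qSumudu q (fun x => qExp q (a * x)) u = 1 / (1 - a * u) := by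
  have hsum := hasSum_pow_mul_qExp_div_qPoch hq0 hq1 h
  simp only [mul_assoc] at hsum
  simp only [qSumudu, qNatural, div_one]
  rw [hsum.tsum_eq, ← mul_div_assoc,
    qPochInf_mul_qExp hq0 hq1 (by rwa [abs_of_pos hq0])]

/-- For `0 < q < 1`, `a, u > 0` with `|a u| < 1`, `S_q(e_q(a x))(u) = 1/(1 - a u)`. -/
theorem qSumudu_qExp (q a u : ℝ) (hq0 : 0 < q) (hq1 : q < 1)
    (ha : 0 < a) (hu : 0 < u) (h : |a * u| < 1) :
    qSumudu q (fun x => qExp q (a * x)) u = 1 / (1 - a * u) :=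
  qSumudu_qExp_general q a u hq0 hq1 h
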